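/- Let n ≥ 3 and m ≥ 3. Then mr_+^R(C_n ∘ C_m) = mr_+^C(C_n ∘ C_m) = n(m − 1) − 2, where C_n ∘ C_m is the corona product of the cycle C_n with the cycle C_m. -/

import Mathlib

open scoped ComplexOrder

/-- The minimum positive semidefinite rank of a simple graph `G` over the field `𝕜`
(`𝕜 = ℝ` gives `mr₊^ℝ`, `𝕜 = ℂ` gives `mr₊^ℂ`): the minimum rank over all positive
semidefinite Hermitian matrices whose off-diagonal zero/nonzero pattern matches `G`. -/
noncomputable def mrPlus (𝕜 : Type) [RCLike 𝕜] {V : Type} [Fintype V] [DecidableEq V]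
    (G : SimpleGraph V) : ℕ :=
  sInf {r : ℕ | ∃ A : Matrix V V 𝕜, A.PosSemidef ∧
    (∀ i j : V, i ≠ j → (A i j ≠ 0 ↔ G.Adj i j)) ∧ A.rank = r}

/-- `G` is a frame graph in the `d`-dimensional inner product space over `𝕜`:
there is a spanning family (frame) `f` indexed by the vertices such that distinct
vertices are adjacent iff the corresponding vectors are non-orthogonal. -/
def IsFrameGraphIn (𝕜 : Type) [RCLike 𝕜] {V : Type} (G : SimpleGraph V) (d : ℕ) : Prop :=
  ∃ f : V → EuclideanSpace 𝕜 (Fin d),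
    Submodule.span 𝕜 (Set.range f) = ⊤ ∧
    ∀ i j : V, i ≠ j → ((inner 𝕜 (f i) (f j) : 𝕜) ≠ 0 ↔ G.Adj i j)

/-- The strong product of two simple graphs. -/
def strongProd {α β : Type} (G : SimpleGraph α) (H : SimpleGraph β) :
    SimpleGraph (α × β) where
  Adj x y := (x.1 = y.1 ∧ H.Adj x.2 y.2) ∨ (x.2 = y.2 ∧ G.Adj x.1 y.1) ∨
    (G.Adj x.1 y.1 ∧ H.Adj x.2 y.2)
  symm := ⟨by
    rintro ⟨a, b⟩ ⟨c, d⟩ (⟨h1, h2⟩ | ⟨h1, h2⟩ | ⟨h1, h2⟩)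
    · exact Or.inl ⟨h1.symm, h2.symm⟩
    · exact Or.inr (Or.inl ⟨h1.symm, h2.symm⟩)
    · exact Or.inr (Or.inr ⟨h1.symm, h2.symm⟩)⟩
  loopless := ⟨by
    rintro ⟨a, b⟩ (⟨_, h⟩ | ⟨_, h⟩ | ⟨h, _⟩)
    · exact H.loopless.irrefl b h
    · exact G.loopless.irrefl a h
    · exact G.loopless.irrefl a h⟩

/-- The join `G ∨ H` of two graphs with disjoint vertex sets. -/
def joinGraph {α β : Type} (G : SimpleGraph α) (H : SimpleGraph β) :
    SimpleGraph (α ⊕ β) where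
  Adj x y := match x, y with
    | Sum.inl a, Sum.inl b => G.Adj a b
    | Sum.inr a, Sum.inr b => H.Adj a b
    | Sum.inl _, Sum.inr _ => True
    | Sum.inr _, Sum.inl _ => True
  symm := ⟨by
    rintro (a | a) (b | b) h
    · exact h.symm
    · trivial
    · trivial
    · exact h.symm⟩
  loopless := ⟨by
    rintro (a | a) h
    · exact G.loopless.irrefl a h
    · exact H.loopless.irrefl a h⟩

/-- The vertex-sum `G · H` of `G` and `H`, obtained by identifying the vertex `a` of `G`
with the vertex `b` of `H` (and no other vertices or edges shared). -/
def vertexSum {α β : Type} (G : SimpleGraph α) (H : SimpleGraph β) (a : α) (b : β) :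
    SimpleGraph (α ⊕ {y : β // y ≠ b}) where
  Adj x y := match x, y with
    | Sum.inl u, Sum.inl u' => G.Adj u u'
    | Sum.inr v, Sum.inr v' => H.Adj v.1 v'.1
    | Sum.inl u, Sum.inr v => u = a ∧ H.Adj b v.1
    | Sum.inr v, Sum.inl u => u = a ∧ H.Adj b v.1
  symm := ⟨by
    rintro (u | v) (u' | v') h
    · exact h.symm
    · exact h
    · exact h
    · exact h.symm⟩
  loopless := ⟨by
    rintro (u | v) h
    · exact G.loopless.irrefl u h
    · exact H.loopless.irrefl v.1 h⟩

/-- The corona product `G ∘ H`: one copy of `G`, one copy of `H` for each vertex of `G`,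
with every vertex of the `i`-th copy of `H` joined to the `i`-th vertex of `G`. -/
def corona {α β : Type} (G : SimpleGraph α) (H : SimpleGraph β) :
    SimpleGraph (α ⊕ α × β) where
  Adj x y := match x, y with
    | Sum.inl u, Sum.inl u' => G.Adj u u'
    | Sum.inr p, Sum.inr q => p.1 = q.1 ∧ H.Adj p.2 q.2
    | Sum.inl u, Sum.inr p => u = p.1
    | Sum.inr p, Sum.inl u => u = p.1
  symm := ⟨by
    rintro (u | p) (u' | q) h
    · exact h.symm
    · exact h
    · exact h
    · exact ⟨h.1.symm, h.2.symm⟩⟩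
  loopless := ⟨by
    rintro (u | p) h
    · exact G.loopless.irrefl u h
    · exact H.loopless.irrefl p.2 h.2⟩

/-- `v : Fin m → V` is an OS-vertex set of `G`: the vertices are distinct, and for each `k`
there is `w` adjacent to `v k`, different from all `v l` with `l ≤ k`, and non-adjacent to
every `v l` (`l < k`) lying in the connected component of `v k` in the subgraph induced by
`{v 0, …, v k}`. -/
def IsOSSet {V : Type} (G : SimpleGraph V) {m : ℕ} (v : Fin m → V) : Prop :=
  Function.Injective v ∧
  ∀ k : Fin m, ∃ w : V,
    G.Adj (v k) w ∧
    (∀ l : Fin m, l ≤ k → w ≠ v l) ∧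
    ∀ l : Fin m, (hl : l < k) →
      (G.induce {x : V | ∃ l' : Fin m, l' ≤ k ∧ x = v l'}).Reachable
        ⟨v l, ⟨l, le_of_lt hl, rfl⟩⟩ ⟨v k, ⟨k, le_refl k, rfl⟩⟩ →
      ¬ G.Adj w (v l)

/-- The OS-number of `G`: the maximum cardinality of an OS-vertex set of `G`. -/
noncomputable def OSNumber {V : Type} (G : SimpleGraph V) : ℕ :=
  sSup {m : ℕ | ∃ v : Fin m → V, IsOSSet G v}

/-!
A positive semidefinite matrix of rank `r` with off-diagonal pattern `G` is the Gram matrix of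
vectors spanning an `r`-dimensional space whose non-orthogonality graph is `G`, so `mr₊` is the
least dimension of such a faithful orthogonal representation.

Lower bound: the vectors of a representation of `C_k` span at least `k - 2` dimensions, since the
first `k - 2` of them are independent (each is detected by its cyclic predecessor, which is
orthogonal to all later ones). In a representation of `C_n ∘ C_m` the `n` copies of `C_m` span
mutually orthogonal spaces of dimension `≥ m - 2`; subtracting from every hub its projection onto
its own copy leaves vectors that still represent `C_n` and are orthogonal to every copy, which adds
`n - 2` further dimensions.

Upper bound: `C_k` is represented in `𝕜^(k-2)` by a path of vectors `e₁, e₂ - e₁, …, -e_{k-2}`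
closed up by the all-ones vector. Placing the `n` copies of `C_m` in orthogonal blocks beside a
representation of `C_n`, and completing each hub in its block by a vector non-orthogonal to all
vectors of `C_m`, represents the corona in dimension `(n - 2) + n (m - 2) = n (m - 1) - 2`.
-/

section Development

open Module Submodule Set
open scoped InnerProductSpace

variable {𝕜 : Type} [RCLike 𝕜] {E : Type*} [NormedAddCommGroup E] [InnerProductSpace 𝕜 E]

variable (𝕜) in
def IsFaithfulOrthRep {V : Type*} (G : SimpleGraph V) (f : V → E) : Prop :=
  ∀ i j, i ≠ j → (⟪f i, f j⟫_𝕜 ≠ 0 ↔ G.Adj i j)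

theorem IsFaithfulOrthRep.inner_eq_zero {V : Type*} {G : SimpleGraph V} {f : V → E}
    (hf : IsFaithfulOrthRep 𝕜 G f) {x y : V} (hxy : x ≠ y) (hadj : ¬G.Adj x y) :
    ⟪f x, f y⟫_𝕜 = 0 :=
  not_not.mp (mt (hf x y hxy).mp hadj)

theorem IsFaithfulOrthRep.ne_zero {V : Type*} {G : SimpleGraph V} {f : V → E}
    (hf : IsFaithfulOrthRep 𝕜 G f) {x y : V} (hxy : G.Adj x y) : f x ≠ 0 := fun h0 =>
  (hf x y hxy.ne).mpr hxy (by rw [h0, inner_zero_left])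

theorem Matrix.rank_gram [FiniteDimensional 𝕜 E] {n : Type*} [Fintype n] (v : n → E) :
    (gram 𝕜 v).rank = finrank 𝕜 (span 𝕜 (range v)) := by
  let b := stdOrthonormalBasis 𝕜 E
  let e : E ≃ₗ[𝕜] (Fin (finrank 𝕜 E) → 𝕜) :=
    b.repr.toLinearEquiv.trans (WithLp.linearEquiv 2 𝕜 _)
  rw [gram_eq_conjTranspose_mul b, rank_conjTranspose_mul_self, rank_eq_finrank_span_cols,
    ← LinearEquiv.finrank_map_eq e, map_span, ← range_comp]
  rfl

open scoped MatrixOrder in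
theorem Matrix.PosSemidef.exists_gram_eq {n : Type*} [Fintype n] {A : Matrix n n 𝕜}
    (hA : A.PosSemidef) : ∃ v : n → EuclideanSpace 𝕜 n, gram 𝕜 v = A := by
  classical
  obtain ⟨B, rfl⟩ := CStarAlgebra.nonneg_iff_eq_star_mul_self.mp hA.nonneg
  refine ⟨fun j => WithLp.toLp 2 (B.col j), ?_⟩
  ext i j
  simp [gram_apply, PiLp.inner_apply, mul_apply, mul_comm]

theorem mrPlus_eq_of_isFaithfulOrthRep {V : Type} [Fintype V] [DecidableEq V]
    {G : SimpleGraph V} {r : ℕ}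
    (hlow : ∀ f : V → EuclideanSpace 𝕜 V, IsFaithfulOrthRep 𝕜 G f →
      r ≤ finrank 𝕜 (span 𝕜 (range f)))
    [FiniteDimensional 𝕜 E] {f : V → E} (hf : IsFaithfulOrthRep 𝕜 G f)
    (hr : finrank 𝕜 E ≤ r) : mrPlus 𝕜 G = r := by
  have hle (A : Matrix V V 𝕜) (hA : A.PosSemidef)
      (hpat : ∀ i j, i ≠ j → (A i j ≠ 0 ↔ G.Adj i j)) : r ≤ A.rank := by
    obtain ⟨v, rfl⟩ := hA.exists_gram_eq
    rw [Matrix.rank_gram]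
    exact hlow v hpat
  have hgram : (Matrix.gram 𝕜 f).rank = r :=
    le_antisymm ((Matrix.rank_gram f).trans_le ((finrank_le _).trans hr))
      (hle _ (Matrix.posSemidef_gram 𝕜 f) hf)
  exact IsLeast.csInf_eq ⟨⟨_, Matrix.posSemidef_gram 𝕜 f, hf, hgram⟩,
    fun _ ⟨A, hA, hpat, hrank⟩ => hrank ▸ hle A hA hpat⟩

theorem linearIndependent_of_triangular {ι K M : Type*} [Fintype ι] [LinearOrder ι] [CommRing K]
    [IsDomain K] [AddCommGroup M] [Module K M] (v : ι → M) (φ : ι → Dual K M)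
    (hdiag : ∀ i, φ i (v i) ≠ 0) (htri : ∀ i j, i < j → φ i (v j) = 0) :
    LinearIndependent K v := by
  classical
  let T : Matrix ι ι K := Matrix.of fun i j => φ i (v j)
  have hdet : T.det ≠ 0 := by
    rw [Matrix.det_of_isLowerTriangular T fun i j hij => htri i j hij]
    exact Finset.prod_ne_zero_iff.mpr fun i _ => hdiag i
  refine Fintype.linearIndependent_iff.mpr fun c hc =>
    congrFun (Matrix.eq_zero_of_mulVec_eq_zero hdet ?_)
  ext i
  simpa [T, Matrix.mulVec, dotProduct, mul_comm] using congrArg (φ i) hc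

theorem finrank_iSup_eq_sum_of_pairwise_isOrtho [FiniteDimensional 𝕜 E] {ι : Type*}
    [Fintype ι] {U : ι → Submodule 𝕜 E} (hU : Pairwise fun i j => U i ⟂ U j) :
    finrank 𝕜 (⨆ i, U i : Submodule 𝕜 E) = ∑ i, finrank 𝕜 (U i) := by
  classical
  rw [← Finset.sup_univ_eq_iSup]
  induction (Finset.univ : Finset ι) using Finset.cons_induction with
  | empty => simp
  | cons a s ha ih =>
    have hortho : U a ⟂ s.sup U :=
      isOrtho_comm.mp (Finset.sup_le fun i hi => (hU (ne_of_mem_of_not_mem hi ha)).le)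
    rw [Finset.sup_cons, Finset.sum_cons, ← ih, ← finrank_sup_add_finrank_inf_eq,
      hortho.disjoint.eq_bot, finrank_bot, add_zero]

-- Over an infinite field a space is not a finite union of the proper subspaces `(𝕜 ∙ v i)ᗮ`.
theorem exists_forall_inner_ne_zero {ι : Type*} [Finite ι] {v : ι → E} (hv : ∀ i, v i ≠ 0) :
    ∃ h : E, ∀ i, ⟪h, v i⟫_𝕜 ≠ 0 := by
  by_contra! hcover
  obtain ⟨i, hi⟩ := Subspace.exists_eq_top_of_iUnion_eq_univ (p := fun i => (𝕜 ∙ v i)ᗮ)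
    (eq_univ_of_forall fun h => mem_iUnion.mpr <| (hcover h).imp fun i hi =>
      mem_orthogonal_singleton_iff_inner_left.mpr hi)
  have : v i ∈ (𝕜 ∙ v i)ᗮ := hi ▸ mem_top
  exact hv i (inner_self_eq_zero.mp (mem_orthogonal_singleton_iff_inner_left.mp this))

theorem SimpleGraph.cycleGraph_adj_iff_val {k : ℕ} (hk : 2 ≤ k) {i j : Fin k} :
    (cycleGraph k).Adj i j ↔ i.val + 1 = j.val ∨ j.val + 1 = i.val ∨
      (i.val = 0 ∧ j.val + 1 = k) ∨ (j.val = 0 ∧ i.val + 1 = k) := by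
  obtain ⟨k, rfl⟩ : ∃ k', k = k' + 2 := ⟨k - 2, by omega⟩
  rw [cycleGraph_adj, sub_eq_iff_eq_add', sub_eq_iff_eq_add', Fin.ext_iff, Fin.ext_iff,
    Fin.val_add_one, Fin.val_add_one]
  split_ifs with h1 h2 h2 <;> simp only [Fin.ext_iff, Fin.val_last] at h1 h2 <;> omega

theorem SimpleGraph.exists_cycleGraph_adj {k : ℕ} (hk : 2 ≤ k) (v : Fin k) :
    ∃ w, (cycleGraph k).Adj v w := by
  obtain ⟨k, rfl⟩ : ∃ k', k = k' + 2 := ⟨k - 2, by omega⟩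
  exact ⟨v + 1, by simp [cycleGraph_adj]⟩

theorem IsFaithfulOrthRep.sub_two_le_finrank_span_cycleGraph {k : ℕ} (hk : 3 ≤ k)
    {g : Fin k → E} (hg : IsFaithfulOrthRep 𝕜 (SimpleGraph.cycleGraph k) g) :
    k - 2 ≤ finrank 𝕜 (span 𝕜 (range g)) := by
  have : FiniteDimensional 𝕜 (span 𝕜 (range g)) :=
    FiniteDimensional.span_of_finite 𝕜 (finite_range g)
  have hadj (i j : Fin k) := SimpleGraph.cycleGraph_adj_iff_val (i := i) (j := j) (by omega)
  let vertex (t : Fin (k - 2)) : Fin k := Fin.castLE (by omega) t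
  -- the cyclic predecessor of `t` is adjacent to `t` and to no later vertex among the first `k - 2`
  let prev (t : Fin (k - 2)) : Fin k :=
    if t.val = 0 then ⟨k - 1, by omega⟩ else ⟨t.val - 1, by omega⟩
  have hvertex (t : Fin (k - 2)) : (vertex t).val = t.val ∧ t.val < k - 2 := ⟨rfl, t.isLt⟩
  have hprev (t : Fin (k - 2)) :
      (t.val = 0 ∧ (prev t).val = k - 1) ∨ (t.val ≠ 0 ∧ (prev t).val + 1 = t.val) := by
    simp only [prev]; split_ifs <;> simp only [and_true, ne_eq] <;> omega
  have hli : LinearIndependent 𝕜 (g ∘ vertex) := by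
    refine linearIndependent_of_triangular _ (fun t => innerₛₗ 𝕜 (g (prev t))) (fun t => ?_)
      (fun s t hst => ?_)
    · have := hprev t; have := hvertex t
      exact (hg _ _ (fun h => by rw [Fin.ext_iff] at h; omega)).mpr ((hadj _ _).mpr (by omega))
    · have := hprev s; have := hvertex t; rw [Fin.lt_def] at hst
      by_contra hne
      have := (hadj _ _).mp ((hg _ _ (fun h => by rw [Fin.ext_iff] at h; omega)).mp hne)
      omega
  calc k - 2 = finrank 𝕜 (span 𝕜 (range (g ∘ vertex))) := by
        rw [finrank_span_eq_card hli, Fintype.card_fin]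
    _ ≤ finrank 𝕜 (span 𝕜 (range g)) :=
        Submodule.finrank_mono (span_mono (range_comp_subset_range _ _))

-- `e_s` with one-based index `s`, and `0` for `s = 0` or `s > N`: this lets the path in `cycleRep`
-- be written without boundary cases.
variable (𝕜) in
noncomputable def oneBasedSingle (N s : ℕ) : EuclideanSpace 𝕜 (Fin N) :=
  WithLp.toLp 2 fun t => if t.val + 1 = s then 1 else 0

theorem sum_ite_val_add_one_eq {M : Type*} [AddCommMonoid M] (N s : ℕ) (c : M) :
    ∑ t : Fin N, (if t.val + 1 = s then c else 0) = if 1 ≤ s ∧ s ≤ N then c else 0 := by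
  split_ifs with hs
  · rw [Finset.sum_eq_single ⟨s - 1, by omega⟩
      (fun t _ ht => if_neg fun h => ht (Fin.ext (show t.val = s - 1 by omega))) (by simp),
      if_pos (show s - 1 + 1 = s by omega)]
  · exact Finset.sum_eq_zero fun t _ => if_neg (by omega)

theorem inner_oneBasedSingle (N s s' : ℕ) :
    ⟪oneBasedSingle 𝕜 N s, oneBasedSingle 𝕜 N s'⟫_𝕜 = if s = s' ∧ 1 ≤ s ∧ s ≤ N then 1 else 0 := by
  simp only [oneBasedSingle, PiLp.inner_apply]
  rw [Finset.sum_congr rfl fun t _ => show _ = if t.val + 1 = s then (if s = s' then (1 : 𝕜) else 0)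
    else 0 by split_ifs <;> simp_all, sum_ite_val_add_one_eq]
  split_ifs <;> first | rfl | (exfalso; omega)

theorem inner_oneBasedSingle_one (N s : ℕ) :
    ⟪oneBasedSingle 𝕜 N s, WithLp.toLp 2 fun _ => 1⟫_𝕜 = if 1 ≤ s ∧ s ≤ N then 1 else 0 := by
  simp only [oneBasedSingle, PiLp.inner_apply]
  rw [Finset.sum_congr rfl fun t _ => show _ = if t.val + 1 = s then (1 : 𝕜) else 0 by
    split_ifs <;> simp, sum_ite_val_add_one_eq]

theorem inner_one_oneBasedSingle (N s : ℕ) :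
    ⟪(WithLp.toLp 2 fun _ => 1 : EuclideanSpace 𝕜 (Fin N)), oneBasedSingle 𝕜 N s⟫_𝕜 =
      if 1 ≤ s ∧ s ≤ N then 1 else 0 := by
  rw [← inner_conj_symm, inner_oneBasedSingle_one, apply_ite (starRingEnd 𝕜), map_one, map_zero]

variable (𝕜) in
noncomputable def cycleRep (k : ℕ) (j : Fin k) : EuclideanSpace 𝕜 (Fin (k - 2)) :=
  if j.val + 1 = k then WithLp.toLp 2 fun _ => 1
  else oneBasedSingle 𝕜 (k - 2) (j.val + 1) - oneBasedSingle 𝕜 (k - 2) j.val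

theorem isFaithfulOrthRep_cycleRep {k : ℕ} (hk : 3 ≤ k) :
    IsFaithfulOrthRep 𝕜 (SimpleGraph.cycleGraph k) (cycleRep 𝕜 k) := by
  intro j j' hne
  rw [SimpleGraph.cycleGraph_adj_iff_val (by omega)]
  have := j.isLt; have := j'.isLt; have := Fin.val_ne_of_ne hne
  unfold cycleRep
  split_ifs
  · omega
  all_goals
    simp only [inner_sub_left, inner_sub_right, inner_oneBasedSingle, inner_oneBasedSingle_one,
      inner_one_oneBasedSingle]
    split_ifs <;>
      simp only [sub_self, sub_zero, zero_sub, sub_neg_eq_add, zero_add, neg_eq_zero, ne_eq,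
        one_ne_zero, not_true_eq_false, not_false_eq_true, true_iff, false_iff, not_or, not_and] <;>
      omega

section CoronaLowerBound

variable {α β : Type}

variable (𝕜) in
def coronaFiberSpan (f : α ⊕ α × β → E) (i : α) : Submodule 𝕜 E :=
  span 𝕜 (range fun j => f (.inr (i, j)))

variable (𝕜) in
noncomputable def coronaHubResidual [FiniteDimensional 𝕜 E] (f : α ⊕ α × β → E) (i : α) : E :=
  f (.inl i) - (coronaFiberSpan 𝕜 f i).starProjection (f (.inl i))

variable {G : SimpleGraph α} {H : SimpleGraph β} {f : α ⊕ α × β → E}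

theorem IsFaithfulOrthRep.corona_fiber (hf : IsFaithfulOrthRep 𝕜 (corona G H) f) (i : α) :
    IsFaithfulOrthRep 𝕜 H fun j => f (.inr (i, j)) := fun j j' hjj' => by
  simpa [corona] using hf (.inr (i, j)) (.inr (i, j')) (by simpa using hjj')

theorem IsFaithfulOrthRep.isOrtho_coronaFiberSpan (hf : IsFaithfulOrthRep 𝕜 (corona G H) f)
    {i i' : α} (hii' : i ≠ i') : coronaFiberSpan 𝕜 f i ⟂ coronaFiberSpan 𝕜 f i' := by
  refine isOrtho_span.mpr ?_
  rintro _ ⟨j, rfl⟩ _ ⟨j', rfl⟩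
  exact hf.inner_eq_zero (by simp [hii']) (by simp [corona, hii'])

theorem IsFaithfulOrthRep.hub_mem_orthogonal_coronaFiberSpan
    (hf : IsFaithfulOrthRep 𝕜 (corona G H) f) {i i' : α} (hii' : i ≠ i') :
    f (.inl i) ∈ (coronaFiberSpan 𝕜 f i')ᗮ := by
  refine (isOrtho_span.mpr ?_ : span 𝕜 {f (.inl i)} ⟂ _) (mem_span_singleton_self _)
  rintro _ rfl _ ⟨j, rfl⟩
  exact hf.inner_eq_zero (by simp) (by simp [corona, hii'])

theorem IsFaithfulOrthRep.coronaHubResidual_mem_orthogonal [FiniteDimensional 𝕜 E]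
    (hf : IsFaithfulOrthRep 𝕜 (corona G H) f) (i i' : α) :
    coronaHubResidual 𝕜 f i ∈ (coronaFiberSpan 𝕜 f i')ᗮ := by
  rcases eq_or_ne i i' with rfl | hii'
  · exact sub_starProjection_mem_orthogonal _
  exact sub_mem (hf.hub_mem_orthogonal_coronaFiberSpan hii')
    (hf.isOrtho_coronaFiberSpan hii' (starProjection_apply_mem _ _))

-- Projecting each hub off its own fiber leaves the hub-hub inner products unchanged.
theorem IsFaithfulOrthRep.corona_hubResidual [FiniteDimensional 𝕜 E]
    (hf : IsFaithfulOrthRep 𝕜 (corona G H) f) :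
    IsFaithfulOrthRep 𝕜 G (coronaHubResidual 𝕜 f) := by
  intro i i' hii'
  have hproj : ⟪(coronaFiberSpan 𝕜 f i).starProjection (f (.inl i)), f (.inl i')⟫_𝕜 = 0 :=
    inner_right_of_mem_orthogonal (starProjection_apply_mem _ _)
      (hf.hub_mem_orthogonal_coronaFiberSpan (Ne.symm hii'))
  have : ⟪coronaHubResidual 𝕜 f i, coronaHubResidual 𝕜 f i'⟫_𝕜 = ⟪f (.inl i), f (.inl i')⟫_𝕜 :=
    calc _ = ⟪coronaHubResidual 𝕜 f i, f (.inl i')⟫_𝕜 := by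
          rw [coronaHubResidual.eq_def _ _ i', inner_sub_right, inner_left_of_mem_orthogonal
            (starProjection_apply_mem _ _) (hf.coronaHubResidual_mem_orthogonal i i'), sub_zero]
      _ = _ := by rw [coronaHubResidual, inner_sub_left, hproj, sub_zero]
  rw [this]
  simpa [corona] using hf _ _ (by simpa using hii')

theorem IsFaithfulOrthRep.card_mul_add_le_finrank_span_corona [FiniteDimensional 𝕜 E]
    [Fintype α] {a b : ℕ}
    (hG : ∀ w : α → E, IsFaithfulOrthRep 𝕜 G w → a ≤ finrank 𝕜 (span 𝕜 (range w)))
    (hH : ∀ g : β → E, IsFaithfulOrthRep 𝕜 H g → b ≤ finrank 𝕜 (span 𝕜 (range g)))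
    (hf : IsFaithfulOrthRep 𝕜 (corona G H) f) :
    Fintype.card α * b + a ≤ finrank 𝕜 (span 𝕜 (range f)) := by
  let U (o : Option α) : Submodule 𝕜 E :=
    o.elim (span 𝕜 (range (coronaHubResidual 𝕜 f))) (coronaFiberSpan 𝕜 f)
  have hresidual (i' : α) : span 𝕜 (range (coronaHubResidual 𝕜 f)) ⟂ coronaFiberSpan 𝕜 f i' :=
    span_le.mpr (by rintro _ ⟨i, rfl⟩; exact hf.coronaHubResidual_mem_orthogonal i i')
  have hU : Pairwise fun o o' => U o ⟂ U o' := by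
    rintro (_ | i) (_ | i') hne
    · exact absurd rfl hne
    · exact hresidual i'
    · exact (hresidual i).symm
    · exact hf.isOrtho_coronaFiberSpan fun h => hne (congrArg some h)
  have hfiber (i : α) : coronaFiberSpan 𝕜 f i ≤ span 𝕜 (range f) :=
    span_mono (range_comp_subset_range _ f)
  have hle : (⨆ o, U o) ≤ span 𝕜 (range f) := by
    refine iSup_le fun o => o.rec (span_le.mpr ?_) hfiber
    rintro _ ⟨i, rfl⟩
    exact sub_mem (subset_span ⟨_, rfl⟩) (hfiber i (starProjection_apply_mem _ _))
  calc Fintype.card α * b + a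
      ≤ ∑ i, finrank 𝕜 (coronaFiberSpan 𝕜 f i) + finrank 𝕜 (U none) := by
        refine add_le_add ?_ (hG _ hf.corona_hubResidual)
        calc Fintype.card α * b = ∑ _i : α, b := by simp
          _ ≤ _ := Finset.sum_le_sum fun i _ => hH _ (hf.corona_fiber i)
    _ = finrank 𝕜 (⨆ o, U o : Submodule 𝕜 E) := by
        rw [finrank_iSup_eq_sum_of_pairwise_isOrtho hU, Fintype.sum_option, add_comm]; rfl
    _ ≤ finrank 𝕜 (span 𝕜 (range f)) := Submodule.finrank_mono hle

end CoronaLowerBound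

section CoronaRep

variable {ι κ α β : Type} [Fintype ι] [Fintype κ] [Fintype α] [DecidableEq α]

theorem inner_toLp_sumElim (x x' : ι → 𝕜) (y y' : κ → 𝕜) :
    ⟪(WithLp.toLp 2 (Sum.elim x y) : EuclideanSpace 𝕜 (ι ⊕ κ)), WithLp.toLp 2 (Sum.elim x' y')⟫_𝕜 =
      ⟪(WithLp.toLp 2 x : EuclideanSpace 𝕜 ι), WithLp.toLp 2 x'⟫_𝕜 +
        ⟪(WithLp.toLp 2 y : EuclideanSpace 𝕜 κ), WithLp.toLp 2 y'⟫_𝕜 := by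
  simp [PiLp.inner_apply, Fintype.sum_sum_type]

theorem inner_toLp_ite_fst_eq (i i' : α) (x y : EuclideanSpace 𝕜 κ) :
    ⟪(WithLp.toLp 2 fun p : α × κ => if p.1 = i then x p.2 else 0 : EuclideanSpace 𝕜 (α × κ)),
      WithLp.toLp 2 fun p : α × κ => if p.1 = i' then y p.2 else 0⟫_𝕜 =
      if i = i' then ⟪x, y⟫_𝕜 else 0 := by
  rcases eq_or_ne i i' with rfl | hii'
  · simp [PiLp.inner_apply, Fintype.sum_prod_type]
  · simp [PiLp.inner_apply, Fintype.sum_prod_type, apply_ite, hii', hii'.symm]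

noncomputable def coronaRep (w : α → EuclideanSpace 𝕜 ι) (g : β → EuclideanSpace 𝕜 κ)
    (h : EuclideanSpace 𝕜 κ) : α ⊕ α × β → EuclideanSpace 𝕜 (ι ⊕ α × κ)
  | .inl i => WithLp.toLp 2 (Sum.elim (w i) fun p => if p.1 = i then h p.2 else 0)
  | .inr (i, j) => WithLp.toLp 2 (Sum.elim 0 fun p => if p.1 = i then g j p.2 else 0)

theorem isFaithfulOrthRep_coronaRep {G : SimpleGraph α} {H : SimpleGraph β}
    {w : α → EuclideanSpace 𝕜 ι} (hw : IsFaithfulOrthRep 𝕜 G w)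
    {g : β → EuclideanSpace 𝕜 κ} (hg : IsFaithfulOrthRep 𝕜 H g)
    {h : EuclideanSpace 𝕜 κ} (hh : ∀ j, ⟪h, g j⟫_𝕜 ≠ 0) :
    IsFaithfulOrthRep 𝕜 (corona G H) (coronaRep w g h) := by
  rintro (i | ⟨i, j⟩) (i' | ⟨i', j'⟩) hne <;>
    simp only [coronaRep, inner_toLp_sumElim, inner_toLp_ite_fst_eq]
  · have hii' : i ≠ i' := fun h => hne (h ▸ rfl)
    simpa [corona, hii'] using hw i i' hii'
  · rcases eq_or_ne i i' with rfl | hii' <;> simp [corona, *]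
  · rcases eq_or_ne i i' with rfl | hii'
    · simp [corona, inner_eq_zero_symm, hh]
    · simp [corona, hii', hii'.symm]
  · rcases eq_or_ne i i' with rfl | hii'
    · simpa [corona] using hg j j' fun h => hne (h ▸ rfl)
    · simp [corona, hii']

end CoronaRep

variable (𝕜) in
theorem mrPlus_corona_cycleGraph_cycleGraph {n m : ℕ} (hn : 3 ≤ n) (hm : 3 ≤ m) :
    mrPlus 𝕜 (corona (SimpleGraph.cycleGraph n) (SimpleGraph.cycleGraph m)) = n * (m - 1) - 2 := by
  have hcount : n * (m - 1) - 2 = Fintype.card (Fin n) * (m - 2) + (n - 2) := by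
    obtain ⟨m, rfl⟩ : ∃ m', m = m' + 2 := ⟨m - 2, by omega⟩
    rw [Fintype.card_fin, show m + 2 - 1 = m + 1 by omega, Nat.add_sub_cancel, Nat.mul_succ]
    omega
  have hcycle (k : ℕ) (hk : 3 ≤ k) := isFaithfulOrthRep_cycleRep (𝕜 := 𝕜) hk
  obtain ⟨h, hh⟩ := exists_forall_inner_ne_zero (𝕜 := 𝕜) fun j =>
    (hcycle m hm).ne_zero (SimpleGraph.exists_cycleGraph_adj (by omega) j).choose_spec
  rw [hcount]
  exact mrPlus_eq_of_isFaithfulOrthRep (fun f hf => hf.card_mul_add_le_finrank_span_corona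
    (fun w hw => hw.sub_two_le_finrank_span_cycleGraph hn)
    (fun g hg => hg.sub_two_le_finrank_span_cycleGraph hm))
    (isFaithfulOrthRep_coronaRep (hcycle n hn) (hcycle m hm) hh)
    (by simp [add_comm])

end Development

/-- for `n, m ≥ 3`, `mr₊(C_n ∘ C_m) = n(m − 1) − 2`. -/
theorem mrPlus_corona_cycle_cycle (n m : ℕ) (hn : 3 ≤ n) (hm : 3 ≤ m) :
    mrPlus ℝ (corona (SimpleGraph.cycleGraph n) (SimpleGraph.cycleGraph m)) =
      n * (m - 1) - 2 ∧
    mrPlus ℂ (corona (SimpleGraph.cycleGraph n) (SimpleGraph.cycleGraph m)) =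
      n * (m - 1) - 2 :=
  ⟨mrPlus_corona_cycleGraph_cycleGraph ℝ hn hm, mrPlus_corona_cycleGraph_cycleGraph ℂ hn hm⟩
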